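/- For any graph G and any n ≥ 0, γ_g′(G ∪ P′_{n+4}) ≤ γ_g′(G ∪ P″_4 ∪ P″_n), where unions are disjoint. -/

import Mathlib

open Finset

namespace DomGame

open scoped Classical

noncomputable section

variable {V : Type*}

/-- The closed neighborhood of `x` in `G`, as a `Finset`. -/
def closedNbr (G : SimpleGraph V) [Fintype V] (x : V) : Finset V :=
  Finset.univ.filter (fun y => y = x ∨ G.Adj x y)

lemma card_compl_lt (G : SimpleGraph V) [Fintype V] {S : Finset V} {x : V}
    (h : ¬ closedNbr G x ⊆ S) :
    (Finset.univ \ (S ∪ closedNbr G x)).card < (Finset.univ \ S).card := by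
  obtain ⟨v, hvN, hvS⟩ := Finset.not_subset.mp h
  apply Finset.card_lt_card
  have hsub : Finset.univ \ (S ∪ closedNbr G x) ⊆ Finset.univ \ S := by
    intro y hy
    simp only [Finset.mem_sdiff, Finset.mem_univ, Finset.mem_union, true_and, not_or] at hy ⊢
    exact hy.1
  exact (Finset.ssubset_iff_of_subset hsub).mpr ⟨v, by simp [hvS], by simp [hvN]⟩

/-- The value of the (partially dominated) domination game on `G|S`, with
`dom = true` meaning Dominator moves next, `dom = false` meaning Staller moves next.
A legal move is a vertex whose closed neighborhood contains a yet undominated vertex;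
Dominator minimizes, Staller maximizes the total number of moves. -/
def gameVal (G : SimpleGraph V) [Fintype V] (dom : Bool) (S : Finset V) : ℕ :=
  let moves := Finset.univ.filter (fun x => ¬ closedNbr G x ⊆ S)
  if h : moves.Nonempty then
    if dom then
      moves.attach.inf' (by simpa using h)
        (fun x => 1 + gameVal G false (S ∪ closedNbr G x.1))
    else
      moves.attach.sup' (by simpa using h)
        (fun x => 1 + gameVal G true (S ∪ closedNbr G x.1))
  else 0
termination_by (Finset.univ \ S).card
decreasing_by
  · exact card_compl_lt G (by simpa using (Finset.mem_filter.mp x.2).2)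
  · exact card_compl_lt G (by simpa using (Finset.mem_filter.mp x.2).2)

/-- The D-game domination number `γ_g(G)`. -/
def gammaD (G : SimpleGraph V) [Fintype V] : ℕ := gameVal G true ∅

/-- The S-game domination number `γ_g'(G)`. -/
def gammaS (G : SimpleGraph V) [Fintype V] : ℕ := gameVal G false ∅

/-- Value of the Staller-pass domination game on `G|S`: Staller may skip
(at most) one move during the game; the skipped turn is not counted.
`dom` tells whose turn it is, `canPass` whether Staller's pass is still available. -/
def spVal (G : SimpleGraph V) [Fintype V] (dom : Bool) (canPass : Bool) (S : Finset V) : ℕ :=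
  let moves := Finset.univ.filter (fun x => ¬ closedNbr G x ⊆ S)
  if h : moves.Nonempty then
    if dom then
      moves.attach.inf' (by simpa using h)
        (fun x => 1 + spVal G false canPass (S ∪ closedNbr G x.1))
    else
      if hc : canPass then
        max (moves.attach.sup' (by simpa using h)
              (fun x => 1 + spVal G true canPass (S ∪ closedNbr G x.1)))
            (spVal G true false S)
      else
        moves.attach.sup' (by simpa using h)
          (fun x => 1 + spVal G true canPass (S ∪ closedNbr G x.1))
  else 0
termination_by ((Finset.univ \ S).card, if canPass then 1 else 0)
decreasing_by
  · exact Prod.Lex.left _ _ (card_compl_lt G (by simpa using (Finset.mem_filter.mp x.2).2))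
  · exact Prod.Lex.left _ _ (card_compl_lt G (by simpa using (Finset.mem_filter.mp x.2).2))
  · simp only [hc, if_true]
    exact Prod.Lex.right _ (by norm_num)
  · exact Prod.Lex.left _ _ (card_compl_lt G (by simpa using (Finset.mem_filter.mp x.2).2))

/-- Value of the Dominator-pass domination game on `G|S`: Dominator may skip
(at most) one move during the game; the skipped turn is not counted. -/
def dpVal (G : SimpleGraph V) [Fintype V] (dom : Bool) (canPass : Bool) (S : Finset V) : ℕ :=
  let moves := Finset.univ.filter (fun x => ¬ closedNbr G x ⊆ S)
  if h : moves.Nonempty then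
    if dom then
      if hc : canPass then
        min (moves.attach.inf' (by simpa using h)
              (fun x => 1 + dpVal G false canPass (S ∪ closedNbr G x.1)))
            (dpVal G false false S)
      else
        moves.attach.inf' (by simpa using h)
          (fun x => 1 + dpVal G false canPass (S ∪ closedNbr G x.1))
    else
      moves.attach.sup' (by simpa using h)
        (fun x => 1 + dpVal G true canPass (S ∪ closedNbr G x.1))
  else 0
termination_by ((Finset.univ \ S).card, if canPass then 1 else 0)
decreasing_by
  · exact Prod.Lex.left _ _ (card_compl_lt G (by simpa using (Finset.mem_filter.mp x.2).2))
  · simp only [hc, if_true]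
    exact Prod.Lex.right _ (by norm_num)
  · exact Prod.Lex.left _ _ (card_compl_lt G (by simpa using (Finset.mem_filter.mp x.2).2))
  · exact Prod.Lex.left _ _ (card_compl_lt G (by simpa using (Finset.mem_filter.mp x.2).2))

/-- The graph `G_{uv}`: obtained from `G - uv` by adding two new vertices
`u' = Sum.inr false` and `v' = Sum.inr true` together with the edges `u v'` and `v u'`. -/
def cutGraph (G : SimpleGraph V) (u v : V) : SimpleGraph (V ⊕ Bool) :=
  SimpleGraph.fromRel (fun x y =>
    match x, y with
    | Sum.inl a, Sum.inl b => G.Adj a b ∧ ¬ (a = u ∧ b = v) ∧ ¬ (a = v ∧ b = u)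
    | Sum.inl a, Sum.inr b => (b = false ∧ a = v) ∨ (b = true ∧ a = u)
    | _, _ => False)

/-- The set of vertices of `G_{uv}` declared dominated, given that `B ⊆ V(G)` is
declared dominated: `B` together with the two new vertices `u'` and `v'`. -/
def cutDom [DecidableEq V] (B : Finset V) : Finset (V ⊕ Bool) :=
  B.image Sum.inl ∪ {Sum.inr false, Sum.inr true}

/-- Disjoint union of two simple graphs. -/
def disjUnion {α β : Type*} (G : SimpleGraph α) (H : SimpleGraph β) :
    SimpleGraph (α ⊕ β) :=
  SimpleGraph.fromRel (fun x y =>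
    match x, y with
    | Sum.inl a, Sum.inl b => G.Adj a b
    | Sum.inr a, Sum.inr b => H.Adj a b
    | _, _ => False)

/-- The disjoint union of `k` paths, the `i`-th on `size i` vertices
(consecutive vertices of each `Fin (size i)` being adjacent). -/
def sigmaPathGraph (k : ℕ) (size : Fin k → ℕ) :
    SimpleGraph (Σ i : Fin k, Fin (size i)) :=
  SimpleGraph.fromRel (fun x y => x.1 = y.1 ∧ x.2.val + 1 = y.2.val)

/-- Vertex set of the three-legged spider `T_{p,q,r}`:
the center together with three legs on `4p`, `4q` and `4r` vertices. -/
abbrev SpiderV (p q r : ℕ) := Unit ⊕ (Fin (4*p) ⊕ (Fin (4*q) ⊕ Fin (4*r)))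

/-- The three-legged spider `T_{p,q,r}`, obtained from paths `P_{4p+1}`, `P_{4q+1}`,
`P_{4r+1}` by identifying one end-vertex of each into the center. In each leg,
vertex `0` is adjacent to the center, and vertices `i`, `i+1` are adjacent. -/
def spider (p q r : ℕ) : SimpleGraph (SpiderV p q r) :=
  SimpleGraph.fromRel (fun x y =>
    match x, y with
    | Sum.inl _, Sum.inr (Sum.inl i) => i.val = 0
    | Sum.inl _, Sum.inr (Sum.inr (Sum.inl i)) => i.val = 0
    | Sum.inl _, Sum.inr (Sum.inr (Sum.inr i)) => i.val = 0
    | Sum.inr (Sum.inl i), Sum.inr (Sum.inl j) => i.val + 1 = j.val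
    | Sum.inr (Sum.inr (Sum.inl i)), Sum.inr (Sum.inr (Sum.inl j)) => i.val + 1 = j.val
    | Sum.inr (Sum.inr (Sum.inr i)), Sum.inr (Sum.inr (Sum.inr j)) => i.val + 1 = j.val
    | _, _ => False)

/-- The weight `w(P'_{4q+r}) = w(P''_{4q+r}) = 2q + c_r` with
`c_0 = 0`, `c_1 = 1`, `c_2 = 3/2`, `c_3 = 7/4`, as a function of `n = 4q + r`. -/
def pathWeight (n : ℕ) : ℚ :=
  2 * (n / 4 : ℕ) +
    (if n % 4 = 0 then 0 else if n % 4 = 1 then 1 else if n % 4 = 2 then 3/2 else 7/4)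

/-! Lay `P″_4` and `P″_n` end to end along `P′_{n+4}`, folding each dominated end vertex onto
its neighbour, and extend by the identity on `G`. This map `f` sends closed neighbourhoods into
closed neighbourhoods, and whenever `f w ∈ N[x]`, the vertex `w` lies in some `N[y]` with
`f (N[y]) ⊆ N[x]`. So on `G ∪ P′_{n+4}` Dominator can play the images of his optimal
moves on the split graph (an image that dominates nothing new is a pass, which by the
continuation principle never helps him), while every Staller move lifts to a move on the split
graph. Throughout, each undominated vertex keeps an undominated preimage, so the game on
`G ∪ P′_{n+4}` ends no later. -/

section GameValue

variable {G : SimpleGraph V} [Fintype V] {S : Finset V} {x y : V}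

lemma mem_closedNbr : y ∈ closedNbr G x ↔ y = x ∨ G.Adj x y := by
  simp [closedNbr]

lemma gameVal_eq_zero (d : Bool) (h : ∀ x, closedNbr G x ⊆ S) : gameVal G d S = 0 := by
  rw [gameVal]
  simp [h]

lemma gameVal_true_le_of_not_subset (hx : ¬ closedNbr G x ⊆ S) :
    gameVal G true S ≤ 1 + gameVal G false (S ∪ closedNbr G x) := by
  have hmem : x ∈ univ.filter (fun z => ¬ closedNbr G z ⊆ S) := by simpa using hx
  rw [gameVal, dif_pos ⟨x, hmem⟩, if_pos rfl]
  exact inf'_le _ (mem_attach _ ⟨x, hmem⟩)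

lemma le_gameVal_false (hx : ¬ closedNbr G x ⊆ S) :
    1 + gameVal G true (S ∪ closedNbr G x) ≤ gameVal G false S := by
  have hmem : x ∈ univ.filter (fun z => ¬ closedNbr G z ⊆ S) := by simpa using hx
  conv_rhs => rw [gameVal, dif_pos ⟨x, hmem⟩, if_neg Bool.false_ne_true]
  exact le_sup' (fun z : {z // _} => 1 + gameVal G true (S ∪ closedNbr G z.1))
    (mem_attach _ ⟨x, hmem⟩)

lemma gameVal_false_le {k : ℕ}
    (h : ∀ x, ¬ closedNbr G x ⊆ S → 1 + gameVal G true (S ∪ closedNbr G x) ≤ k) :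
    gameVal G false S ≤ k := by
  rw [gameVal]
  by_cases hne : (univ.filter fun z => ¬ closedNbr G z ⊆ S).Nonempty
  · rw [dif_pos hne, if_neg Bool.false_ne_true]
    exact sup'_le _ _ fun z _ => h z (by simpa using (mem_filter.mp z.2).2)
  · rw [dif_neg hne]
    exact Nat.zero_le k

lemma le_gameVal_true {k : ℕ} (hy : ¬ closedNbr G y ⊆ S)
    (h : ∀ x, ¬ closedNbr G x ⊆ S → k ≤ 1 + gameVal G false (S ∪ closedNbr G x)) :
    k ≤ gameVal G true S := by
  have hmem : y ∈ univ.filter (fun z => ¬ closedNbr G z ⊆ S) := by simpa using hy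
  rw [gameVal, dif_pos ⟨y, hmem⟩, if_pos rfl]
  exact le_inf' _ _ fun z _ => h z (by simpa using (mem_filter.mp z.2).2)

lemma gameVal_true_le_of_antitone
    (h : ∀ T, S ⊆ T → gameVal G false T ≤ gameVal G false S) :
    gameVal G true S ≤ 1 + gameVal G false S := by
  by_cases hS : ∃ x, ¬ closedNbr G x ⊆ S
  · obtain ⟨x, hx⟩ := hS
    have := h _ (subset_union_left (s₂ := closedNbr G x))
    have := gameVal_true_le_of_not_subset hx
    omega
  · simp only [not_exists, not_not] at hS
    simp [gameVal_eq_zero true hS]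

/-- The continuation principle. -/
theorem gameVal_le_of_subset (d : Bool) {S T : Finset V} (hST : S ⊆ T) :
    gameVal G d T ≤ gameVal G d S := by
  by_cases hT : ∃ y, ¬ closedNbr G y ⊆ T
  · obtain ⟨y, hy⟩ := hT
    cases d
    · refine gameVal_false_le fun x hxT => ?_
      have hxS : ¬ closedNbr G x ⊆ S := fun h => hxT (h.trans hST)
      have := gameVal_le_of_subset true (union_subset_union_left hST (t := closedNbr G x))
      have := le_gameVal_false hxS
      omega
    · refine le_gameVal_true (fun h => hy (h.trans hST)) fun x hxS => ?_
      by_cases hxT : closedNbr G x ⊆ T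
      · calc gameVal G true T ≤ gameVal G true (S ∪ closedNbr G x) :=
              gameVal_le_of_subset true (union_subset hST hxT)
          _ ≤ 1 + gameVal G false (S ∪ closedNbr G x) :=
              gameVal_true_le_of_antitone fun _ hU => gameVal_le_of_subset false hU
      · calc gameVal G true T ≤ 1 + gameVal G false (T ∪ closedNbr G x) :=
              gameVal_true_le_of_not_subset hxT
          _ ≤ 1 + gameVal G false (S ∪ closedNbr G x) :=
              Nat.add_le_add_left (gameVal_le_of_subset false (union_subset_union_left hST)) 1
  · simp only [not_exists, not_not] at hT
    simp [gameVal_eq_zero d hT]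
termination_by (univ \ S).card
decreasing_by all_goals exact card_compl_lt G hxS

/-- A Dominator move that dominates nothing new is a pass, and passing never helps Dominator. -/
lemma gameVal_true_le (x : V) : gameVal G true S ≤ 1 + gameVal G false (S ∪ closedNbr G x) := by
  by_cases hx : closedNbr G x ⊆ S
  · rw [union_eq_left.mpr hx]
    exact gameVal_true_le_of_antitone fun _ hT => gameVal_le_of_subset false hT
  · exact gameVal_true_le_of_not_subset hx

end GameValue

section DisjUnion

variable {V W : Type*} {G : SimpleGraph V} {H : SimpleGraph W}

@[simp] lemma disjUnion_adj_inl_inl {a b : V} :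
    (disjUnion G H).Adj (.inl a) (.inl b) ↔ G.Adj a b := by
  simp [disjUnion, G.adj_comm b a, and_iff_right_of_imp G.ne_of_adj]

@[simp] lemma disjUnion_adj_inr_inr {a b : W} :
    (disjUnion G H).Adj (.inr a) (.inr b) ↔ H.Adj a b := by
  simp [disjUnion, H.adj_comm b a, and_iff_right_of_imp H.ne_of_adj]

@[simp] lemma disjUnion_not_adj_inl_inr {a : V} {b : W} :
    ¬ (disjUnion G H).Adj (.inl a) (.inr b) := by
  simp [disjUnion]

@[simp] lemma disjUnion_not_adj_inr_inl {a : W} {b : V} :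
    ¬ (disjUnion G H).Adj (.inr a) (.inl b) := by
  simp [disjUnion]

lemma inl_mem_closedNbr_inl [Fintype V] [Fintype W] {a b : V} :
    (.inl b : V ⊕ W) ∈ closedNbr (disjUnion G H) (.inl a) ↔ b ∈ closedNbr G a := by
  simp [mem_closedNbr]

lemma inr_mem_closedNbr_inr [Fintype V] [Fintype W] {a b : W} :
    (.inr b : V ⊕ W) ∈ closedNbr (disjUnion G H) (.inr a) ↔ b ∈ closedNbr H a := by
  simp [mem_closedNbr]

lemma inr_not_mem_closedNbr_inl [Fintype V] [Fintype W] {a : V} {b : W} :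
    (.inr b : V ⊕ W) ∉ closedNbr (disjUnion G H) (.inl a) := by
  simp [mem_closedNbr]

lemma inl_not_mem_closedNbr_inr [Fintype V] [Fintype W] {a : W} {b : V} :
    (.inl b : V ⊕ W) ∉ closedNbr (disjUnion G H) (.inr a) := by
  simp [mem_closedNbr]

def disjUnionAssoc {U : Type*} (G : SimpleGraph V) (H : SimpleGraph W) (K : SimpleGraph U) :
    disjUnion (disjUnion G H) K ≃g disjUnion G (disjUnion H K) where
  toEquiv := Equiv.sumAssoc V W U
  map_rel_iff' := by rintro ((a | a) | a) ((b | b) | b) <;> simp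

end DisjUnion

lemma exists_preimage_not_mem_union {V W : Type*} {f : W → V} {S A : Finset V} {T B : Finset W}
    (hST : ∀ v ∉ S, ∃ w ∉ T, f w = v) (hBA : Set.MapsTo f B A) :
    ∀ v ∉ S ∪ A, ∃ w ∉ T ∪ B, f w = v := by
  intro v hv
  rw [mem_union, not_or] at hv
  obtain ⟨w, hwT, rfl⟩ := hST v hv.1
  exact ⟨w, by simpa [hwT] using fun hwB => hv.2 (hBA hwB), rfl⟩

section GameMap

variable {V W X : Type*} [Fintype V] [Fintype W] [Fintype X]
  {G : SimpleGraph V} {H : SimpleGraph W} {f : W → V}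

/-- A map along which a play on `H` can be shadowed on `G`: Dominator copies each move `y`
on `H` as the move `f y` on `G`, and each move `x` of Staller on `G` lifts to a move `y` on `H`
whose closed neighbourhood `f` sends into that of `x`. -/
structure IsDomGameMap (H : SimpleGraph W) (G : SimpleGraph V) (f : W → V) : Prop where
  mapsTo_closedNbr (y : W) : Set.MapsTo f (closedNbr H y) (closedNbr G (f y))
  exists_lift (x : V) (w : W) (hw : f w ∈ closedNbr G x) :
    ∃ y, w ∈ closedNbr H y ∧ Set.MapsTo f (closedNbr H y) (closedNbr G x)

lemma IsDomGameMap.id (G : SimpleGraph V) : IsDomGameMap G G id where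
  mapsTo_closedNbr _ _ h := h
  exists_lift x _ hw := ⟨x, hw, fun _ h => h⟩

lemma IsDomGameMap.comp {K : SimpleGraph X} {g : X → W} (hf : IsDomGameMap H G f)
    (hg : IsDomGameMap K H g) : IsDomGameMap K G (f ∘ g) where
  mapsTo_closedNbr z := (hf.mapsTo_closedNbr (g z)).comp (hg.mapsTo_closedNbr z)
  exists_lift x w hw := by
    obtain ⟨y, hwy, hy⟩ := hf.exists_lift x (g w) hw
    obtain ⟨z, hwz, hz⟩ := hg.exists_lift y w hwy
    exact ⟨z, hwz, hy.comp hz⟩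

lemma iso_apply_mem_closedNbr_iff (e : H ≃g G) {y z : W} :
    e z ∈ closedNbr G (e y) ↔ z ∈ closedNbr H y := by
  simp [mem_closedNbr, SimpleGraph.Iso.map_adj_iff]

lemma isDomGameMap_of_iso (e : H ≃g G) : IsDomGameMap H G e where
  mapsTo_closedNbr _ _ := (iso_apply_mem_closedNbr_iff e).mpr
  exists_lift x w hw := by
    rw [← e.apply_symm_apply x, iso_apply_mem_closedNbr_iff e] at hw
    refine ⟨e.symm x, hw, fun z hz => ?_⟩
    rwa [Finset.mem_coe, ← e.apply_symm_apply x, iso_apply_mem_closedNbr_iff e]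

lemma IsDomGameMap.sumMap {V' W' : Type*} [Fintype V'] [Fintype W'] {G' : SimpleGraph V'}
    {H' : SimpleGraph W'} {g : W' → V'} (hf : IsDomGameMap H G f) (hg : IsDomGameMap H' G' g) :
    IsDomGameMap (disjUnion H H') (disjUnion G G') (Sum.map f g) where
  mapsTo_closedNbr := by
    rintro (y | y) (z | z) hz <;>
      simp only [Finset.mem_coe, Sum.map_inl, Sum.map_inr, inl_mem_closedNbr_inl,
        inr_mem_closedNbr_inr, inr_not_mem_closedNbr_inl, inl_not_mem_closedNbr_inr] at hz ⊢
    exacts [hf.mapsTo_closedNbr y hz, hg.mapsTo_closedNbr y hz]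
  exists_lift := by
    rintro (x | x) (w | w) hw <;>
      simp only [Sum.map_inl, Sum.map_inr, inl_mem_closedNbr_inl,
        inr_mem_closedNbr_inr, inr_not_mem_closedNbr_inl, inl_not_mem_closedNbr_inr] at hw
    · obtain ⟨y, hwy, hy⟩ := hf.exists_lift x w hw
      refine ⟨.inl y, inl_mem_closedNbr_inl.mpr hwy, ?_⟩
      rintro (z | z) hz <;>
        simp only [Finset.mem_coe, Sum.map_inl, inl_mem_closedNbr_inl,
          inr_not_mem_closedNbr_inl] at hz ⊢
      exact hy hz
    · obtain ⟨y, hwy, hy⟩ := hg.exists_lift x w hw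
      refine ⟨.inr y, inr_mem_closedNbr_inr.mpr hwy, ?_⟩
      rintro (z | z) hz <;>
        simp only [Finset.mem_coe, Sum.map_inr, inr_mem_closedNbr_inr,
          inl_not_mem_closedNbr_inr] at hz ⊢
      exact hy hz

lemma IsDomGameMap.exists_lift_move (hf : IsDomGameMap H G f) {S : Finset V} {T : Finset W}
    {x : V} (hST : ∀ v ∉ S, ∃ w ∉ T, f w = v) (hx : ¬ closedNbr G x ⊆ S) :
    ∃ y, ¬ closedNbr H y ⊆ T ∧ ∀ v ∉ S ∪ closedNbr G x, ∃ w ∉ T ∪ closedNbr H y, f w = v := by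
  obtain ⟨v, hvx, hvS⟩ := not_subset.mp hx
  obtain ⟨w, hwT, rfl⟩ := hST _ hvS
  obtain ⟨y, hwy, hy⟩ := hf.exists_lift x w hvx
  exact ⟨y, fun h => hwT (h hwy), exists_preimage_not_mem_union hST hy⟩

theorem IsDomGameMap.gameVal_le (hf : IsDomGameMap H G f) (d : Bool) {S : Finset V}
    {T : Finset W} (hST : ∀ v ∉ S, ∃ w ∉ T, f w = v) : gameVal G d S ≤ gameVal H d T := by
  cases d
  · refine gameVal_false_le fun x hx => ?_
    obtain ⟨y, hy, hST'⟩ := hf.exists_lift_move hST hx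
    have := hf.gameVal_le true hST'
    have := le_gameVal_false hy
    omega
  · by_cases hT : ∃ y, ¬ closedNbr H y ⊆ T
    · obtain ⟨y₀, hy₀⟩ := hT
      refine le_gameVal_true hy₀ fun y hy => ?_
      have := hf.gameVal_le false
        (exists_preimage_not_mem_union hST (hf.mapsTo_closedNbr y))
      have := gameVal_true_le (G := G) (S := S) (f y)
      omega
    · simp only [not_exists, not_not] at hT
      have hS : ∀ x, closedNbr G x ⊆ S := fun x => by
        by_contra hx
        obtain ⟨y, hy, -⟩ := hf.exists_lift_move hST hx
        exact hy (hT y)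
      simp [gameVal_eq_zero true hS]
termination_by (univ \ T).card
decreasing_by all_goals exact card_compl_lt H hy

end GameMap

open SimpleGraph in
lemma mem_closedNbr_pathGraph {m : ℕ} {i j : Fin m} :
    j ∈ closedNbr (pathGraph m) i ↔ j.val = i.val ∨ i.val + 1 = j.val ∨ j.val + 1 = i.val := by
  simp [mem_closedNbr, pathGraph_adj, Fin.ext_iff]

/-- Lays `P₆` and `P_{n+2}` end to end along `P_{n+5}`, folding the last vertex of `P₆` and
both end vertices of `P_{n+2}` onto their neighbours. -/
def splitPathMap (n : ℕ) : Fin 6 ⊕ Fin (n + 2) → Fin (n + 5)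
  | .inl j => ⟨min j 4, by omega⟩
  | .inr j => ⟨min (max (j + 4) 5) (n + 4), by omega⟩

open SimpleGraph in
lemma isDomGameMap_splitPathMap (n : ℕ) :
    IsDomGameMap (disjUnion (pathGraph 6) (pathGraph (n + 2))) (pathGraph (n + 5))
      (splitPathMap n) where
  mapsTo_closedNbr := by
    rintro (y | y) (z | z) hz <;>
      simp only [Finset.mem_coe, inl_mem_closedNbr_inl, inr_mem_closedNbr_inr,
        inr_not_mem_closedNbr_inl, inl_not_mem_closedNbr_inr, mem_closedNbr_pathGraph,
        splitPathMap] at hz ⊢ <;> omega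
  -- lift `w` to the vertex among `w` and its neighbours that is closest to `x`
  exists_lift := by
    rintro x (j | j) hw <;> simp only [mem_closedNbr_pathGraph, splitPathMap] at hw
    · refine ⟨.inl ⟨max (j - 1) (min x (min (j + 1) 5)), by omega⟩, ?_, ?_⟩
      · simp only [inl_mem_closedNbr_inl, mem_closedNbr_pathGraph]; omega
      · rintro (z | z) hz
        · simp only [Finset.mem_coe, inl_mem_closedNbr_inl, mem_closedNbr_pathGraph,
            splitPathMap] at hz ⊢
          omega
        · exact absurd hz inr_not_mem_closedNbr_inl
    · refine ⟨.inr ⟨max (j - 1) (min (x - 4) (min (j + 1) (n + 1))), by omega⟩, ?_, ?_⟩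
      · simp only [inr_mem_closedNbr_inr, mem_closedNbr_pathGraph]; omega
      · rintro (z | z) hz
        · exact absurd hz inl_not_mem_closedNbr_inr
        · simp only [Finset.mem_coe, inr_mem_closedNbr_inr, mem_closedNbr_pathGraph,
            splitPathMap] at hz ⊢
          omega

lemma exists_splitPathMap_eq (n : ℕ) {i : Fin (n + 5)} (hi : i ≠ 0) :
    ∃ w ∉ ({.inl 0, .inl 5, .inr 0, .inr (Fin.last (n + 1))} : Finset (Fin 6 ⊕ Fin (n + 2))),
      splitPathMap n w = i := by
  have hi : i.val ≠ 0 := Fin.val_ne_zero_iff.mpr hi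
  by_cases hi4 : i.val ≤ 4
  · refine ⟨.inl ⟨i, by omega⟩, ?_, Fin.ext (by simp only [splitPathMap]; omega)⟩
    simp only [mem_insert, mem_singleton, Sum.inl.injEq, reduceCtorEq, or_false, Fin.ext_iff,
      Fin.coe_ofNat_eq_mod, Nat.zero_mod, Nat.mod_succ]
    omega
  · refine ⟨.inr ⟨i - 4, by omega⟩, ?_, Fin.ext (by simp only [splitPathMap]; omega)⟩
    simp only [mem_insert, mem_singleton, Sum.inr.injEq, reduceCtorEq, false_or, Fin.ext_iff,
      Fin.coe_ofNat_eq_mod, Nat.zero_mod, Fin.val_last]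
    omega

/-- For any graph `G` and `n ≥ 0`,
`γ_g′(G ∪ P′_{n+4}) ≤ γ_g′(G ∪ P″_4 ∪ P″_n)` (disjoint unions). Here
`P′_{n+4}` is the path on `n+5` vertices with one end dominated, `P″_4` is the
path on `6` vertices with both ends dominated, and `P″_n` is the path on `n+2`
vertices with both ends dominated. -/
theorem split_long_path {α : Type*} [Fintype α] (G : SimpleGraph α) (n : ℕ) :
    gameVal (disjUnion G (SimpleGraph.pathGraph (n+5))) false {Sum.inr 0}
      ≤ gameVal (disjUnion (disjUnion G (SimpleGraph.pathGraph 6))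
            (SimpleGraph.pathGraph (n+2))) false
          {Sum.inl (Sum.inr 0), Sum.inl (Sum.inr (5 : Fin 6)),
            Sum.inr 0, Sum.inr (Fin.last (n+1))} := by
  have hmap := ((IsDomGameMap.id G).sumMap (isDomGameMap_splitPathMap n)).comp
    (isDomGameMap_of_iso (disjUnionAssoc G _ _))
  refine hmap.gameVal_le false ?_
  rintro (a | i) hi
  · exact ⟨.inl (.inl a), by simp, rfl⟩
  · obtain ⟨w, hw, rfl⟩ := exists_splitPathMap_eq n (i := i) (by rintro rfl; simp at hi)
    rcases w with j | j
    · exact ⟨.inl (.inr j), by simpa using hw, rfl⟩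
    · exact ⟨.inr j, by simpa using hw, rfl⟩

end

end DomGame
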